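/- arXiv:2310.08264 — 2 statements merged into one kernel-verified Lean document; each statement's English description precedes it below -/
import Mathlib

section
/- Let n ≥ 2 and μ > 0, and let v ∈ C¹(ℝⁿ). Suppose that for every b ∈ ℝⁿ, every λ > 0 and every x ∈ ℝⁿ with 0 < |x| < λ, the inequality |x|^{−μ} v(b + x/|x|²) − λ^{−μ} v(b + x/λ²) ≥ 0 holds. Then v is constant on ℝⁿ. -/
open MeasureTheory Real Filter Metric

open Topology

/-! Given `P ≠ Q` and `q ∈ (0, 1)`, take `x` parallel to `P - Q`, `l = ‖x‖ / q`, and the size of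
`x` and the centre `b` such that `b + x / ‖x‖² = P` and `b + x / l² = Q`; the hypothesis then reads
`q ^ μ * v Q ≤ v P`. Letting `q → 1` gives `v Q ≤ v P` for all `P`, `Q`. -/

noncomputable section

section MovingSpheres

variable {E : Type*} [NormedAddCommGroup E] [NormedSpace ℝ E] {μ : ℝ} {v : E → ℝ}

theorem div_rpow_mul_le_of_moving_spheres
    (h : ∀ (b : E) (l : ℝ), 0 < l → ∀ x : E, 0 < ‖x‖ → ‖x‖ < l →
      0 ≤ ‖x‖ ^ (-μ) * v (b + (‖x‖ ^ 2)⁻¹ • x) - l ^ (-μ) * v (b + (l ^ 2)⁻¹ • x))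
    (b x : E) {l : ℝ} (hx : 0 < ‖x‖) (hxl : ‖x‖ < l) :
    (‖x‖ / l) ^ μ * v (b + (l ^ 2)⁻¹ • x) ≤ v (b + (‖x‖ ^ 2)⁻¹ • x) := by
  have hl : 0 < l := hx.trans hxl
  have key := mul_le_mul_of_nonneg_left (sub_nonneg.mp (h b l hl x hx hxl))
    (rpow_nonneg hx.le μ)
  rwa [← mul_assoc, ← mul_assoc, ← rpow_add hx, add_neg_cancel, rpow_zero, one_mul,
    rpow_neg hl.le, ← div_eq_mul_inv, ← div_rpow hx.le hl.le] at key

theorem rpow_mul_le_of_moving_spheres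
    (h : ∀ (b : E) (l : ℝ), 0 < l → ∀ x : E, 0 < ‖x‖ → ‖x‖ < l →
      0 ≤ ‖x‖ ^ (-μ) * v (b + (‖x‖ ^ 2)⁻¹ • x) - l ^ (-μ) * v (b + (l ^ 2)⁻¹ • x))
    {P Q : E} (hPQ : P ≠ Q) {q : ℝ} (hq0 : 0 < q) (hq1 : q < 1) :
    q ^ μ * v Q ≤ v P := by
  set d := ‖P - Q‖
  have hd : 0 < d := norm_pos_iff.mpr (sub_ne_zero.mpr hPQ)
  have hq2 : 0 < 1 - q ^ 2 := by nlinarith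
  set r := (1 - q ^ 2) / d
  have hr : 0 < r := div_pos hq2 hd
  set x := (r / d) • (P - Q)
  have hxr : ‖x‖ = r := by
    rw [norm_smul, Real.norm_of_nonneg (div_pos hr hd).le, div_mul_cancel₀ _ hd.ne']
  have hrl : r < r / q := (lt_div_iff₀ hq0).mpr (mul_lt_of_lt_one_right hr hq1)
  have key := div_rpow_mul_le_of_moving_spheres h (P - (1 - q ^ 2)⁻¹ • (P - Q)) x
    (hxr ▸ hr) (hxr ▸ hrl)
  convert key using 3
  · rw [hxr, div_div_cancel₀ hr.ne']
  · have hc : ((r / q) ^ 2)⁻¹ * (r / d) = (1 - q ^ 2)⁻¹ - 1 := by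
      simp only [r]
      field_simp
      ring
    rw [hxr, smul_smul, hc, sub_smul, one_smul]
    abel
  · have hc : (r ^ 2)⁻¹ * (r / d) = (1 - q ^ 2)⁻¹ := by
      simp only [r]
      field_simp
    rw [hxr, smul_smul, hc, sub_add_cancel]

theorem le_of_forall_rpow_mul_le {a c : ℝ} (h : ∀ q ∈ Set.Ioo (0 : ℝ) 1, q ^ μ * a ≤ c) :
    a ≤ c := by
  have hlim : Tendsto (fun q : ℝ => q ^ μ * a) (𝓝[<] 1) (𝓝 a) := by
    have : ContinuousAt (fun q : ℝ => q ^ μ * a) 1 :=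
      (continuousAt_rpow_const 1 μ (Or.inl one_ne_zero)).mul continuousAt_const
    simpa using this.tendsto.mono_left nhdsWithin_le_nhds
  exact le_of_tendsto hlim (mem_of_superset (Ioo_mem_nhdsLT zero_lt_one) h)

end MovingSpheres

theorem const_of_moving_spheres_v_general (n : ℕ) (μ : ℝ)
    (v : EuclideanSpace ℝ (Fin n) → ℝ)
    (h : ∀ (b : EuclideanSpace ℝ (Fin n)) (l : ℝ), 0 < l →
      ∀ x : EuclideanSpace ℝ (Fin n), 0 < ‖x‖ → ‖x‖ < l →
        0 ≤ ‖x‖ ^ (-μ) * v (b + (‖x‖ ^ 2)⁻¹ • x) - l ^ (-μ) * v (b + (l ^ 2)⁻¹ • x)) :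
    ∃ c : ℝ, ∀ x : EuclideanSpace ℝ (Fin n), v x = c := by
  have hle : ∀ P Q, v Q ≤ v P := fun P Q => by
    rcases eq_or_ne P Q with rfl | hPQ
    · exact le_rfl
    · exact le_of_forall_rpow_mul_le fun q hq => rpow_mul_le_of_moving_spheres h hPQ hq.1 hq.2
  exact ⟨v 0, fun x => le_antisymm (hle 0 x) (hle x 0)⟩

theorem const_of_moving_spheres_v (n : ℕ) (hn : 2 ≤ n) (μ : ℝ) (hμ0 : 0 < μ)
    (v : EuclideanSpace ℝ (Fin n) → ℝ) (hv : ContDiff ℝ 1 v)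
    (h : ∀ (b : EuclideanSpace ℝ (Fin n)) (l : ℝ), 0 < l →
      ∀ x : EuclideanSpace ℝ (Fin n), 0 < ‖x‖ → ‖x‖ < l →
        0 ≤ ‖x‖ ^ (-μ) * v (b + (‖x‖ ^ 2)⁻¹ • x) - l ^ (-μ) * v (b + (l ^ 2)⁻¹ • x)) :
    ∃ c : ℝ, ∀ x : EuclideanSpace ℝ (Fin n), v x = c :=
  const_of_moving_spheres_v_general n μ v h
end
end

section
/- Let n ≥ 2 and let u ∈ C¹(ℝⁿ). Suppose that for every b ∈ ℝⁿ, every λ > 0 and every x ∈ ℝⁿ with 0 < |x| < λ, the inequality u(b + x/|x|²) − 2 ln|x| − u(b + x/λ²) + 2 ln λ ≥ 0 holds. Then u is constant on ℝⁿ. -/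
open MeasureTheory Real Filter Metric

noncomputable section

theorem const_of_moving_spheres_u (n : ℕ) (hn : 2 ≤ n)
    (u : EuclideanSpace ℝ (Fin n) → ℝ) (hu : ContDiff ℝ 1 u)
    (h : ∀ (b : EuclideanSpace ℝ (Fin n)) (l : ℝ), 0 < l →
      ∀ x : EuclideanSpace ℝ (Fin n), 0 < ‖x‖ → ‖x‖ < l →
        0 ≤ u (b + (‖x‖ ^ 2)⁻¹ • x) - 2 * Real.log ‖x‖ - u (b + (l ^ 2)⁻¹ • x)
          + 2 * Real.log l) :
    ∃ c : ℝ, ∀ x : EuclideanSpace ℝ (Fin n), u x = c := by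
  have key : ∀ y z : EuclideanSpace ℝ (Fin n), u z ≤ u y := by
    intro y z
    rcases eq_or_ne y z with rfl | hne
    · exact le_refl _
    have hD : 0 < ‖y - z‖ := by
      rw [norm_sub_pos_iff]; exact hne
    obtain ⟨e, he, hDe⟩ : ∃ e : EuclideanSpace ℝ (Fin n), ‖e‖ = 1 ∧ ‖y - z‖ • e = y - z := by
      refine ⟨‖y - z‖⁻¹ • (y - z), ?_, ?_⟩
      · rw [norm_smul, norm_inv, norm_norm, inv_mul_cancel₀ hD.ne']
      · rw [smul_smul, mul_inv_cancel₀ hD.ne', one_smul]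
    set D := ‖y - z‖ with hDdef
    refine le_of_forall_pos_le_add ?_
    intro ε hε
    have hexp : 1 < Real.exp ε := by
      rw [show (1:ℝ) = Real.exp 0 by simp]; exact Real.exp_lt_exp.2 hε
    have hne1 : Real.exp ε - 1 ≠ 0 := ne_of_gt (by linarith)
    set T := D / (Real.exp ε - 1) with hTdef
    have hT : 0 < T := div_pos hD (by linarith)
    set s := T + D with hsdef
    have hs : 0 < s := by linarith
    have hTs : T < s := by linarith
    set l := (Real.sqrt (s * T))⁻¹ with hldef
    have hst : 0 < s * T := mul_pos hs hT
    have hsq : 0 < Real.sqrt (s * T) := Real.sqrt_pos.2 hst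
    have hl : 0 < l := inv_pos.2 hsq
    set x : EuclideanSpace ℝ (Fin n) := s⁻¹ • e with hxdef
    have hx : ‖x‖ = s⁻¹ := by
      rw [hxdef, norm_smul, he, mul_one, norm_inv, Real.norm_of_nonneg hs.le]
    have hxpos : 0 < ‖x‖ := by rw [hx]; positivity
    have hxl : ‖x‖ < l := by
      rw [hx, hldef]
      have h2 : Real.sqrt (s * T) < s := (Real.sqrt_lt' hs).2 (by nlinarith)
      exact inv_strictAnti₀ hsq h2
    have H := h (z - T • e) l hl x hxpos hxl
    have e1 : (‖x‖ ^ 2)⁻¹ • x = s • e := by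
      rw [hx, hxdef, smul_smul]
      congr 1
      rw [inv_pow, inv_inv]
      field_simp
    have e2 : (l ^ 2)⁻¹ • x = T • e := by
      rw [hxdef, smul_smul]
      congr 1
      rw [hldef, inv_pow, inv_inv, Real.sq_sqrt hst.le, mul_comm s T, mul_assoc,
        mul_inv_cancel₀ hs.ne', mul_one]
    have hp1 : z - T • e + (‖x‖ ^ 2)⁻¹ • x = y := by
      rw [e1]
      have h3 : z - T • e + s • e = z + D • e := by rw [hsdef]; module
      rw [h3, hDe]; abel
    have hp2 : z - T • e + (l ^ 2)⁻¹ • x = z := by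
      rw [e2]; abel
    rw [hp1, hp2, hx] at H
    have hlog1 : Real.log s⁻¹ = -Real.log s := Real.log_inv s
    have hlog2 : Real.log l = -(Real.log s + Real.log T) / 2 := by
      rw [hldef, Real.log_inv, Real.log_sqrt hst.le, Real.log_mul hs.ne' hT.ne']
      ring
    rw [hlog1, hlog2] at H
    have hfin : u z ≤ u y + (Real.log s - Real.log T) := by linarith
    have hlogeq : Real.log s - Real.log T = ε := by
      rw [← Real.log_div hs.ne' hT.ne']
      have hd : s / T = Real.exp ε := by
        rw [hsdef, hTdef]
        field_simp
        ring
      rw [hd, Real.log_exp]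
    linarith
  exact ⟨u 0, fun x => le_antisymm (key 0 x) (key x 0)⟩

end
end
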